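/- arXiv:2201.02371 — 3 statements merged into one kernel-verified Lean document; each statement's English description precedes it below -/
import Mathlib

section
/- For the Beam-Warming amplification factor F(θ) = 1 − 2λ² sin²(θ/2) − 4λ(1−λ) sin⁴(θ/2) + i λ sin θ (1 + 2(1−λ) sin²(θ/2)), one has |F(θ)|² = 1 − 4λ(1−λ)²(2−λ) sin⁴(θ/2) for all real θ. -/
/-! Write `s = sin(θ/2)`, `c = cos(θ/2)` and `sin θ = 2sc`. Then `F(θ)` has real part
`1 − 2λ²s² − 4λ(1−λ)s⁴` and imaginary part `2λsc(1 + 2(1−λ)s²)`, and after substituting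
`c² = 1 − s²` the sum of their squares is a polynomial identity in `λ` and `s²`. -/

lemma beamWarming_re_sq_add_im_sq {lam s c : ℝ} (hsc : s ^ 2 + c ^ 2 = 1) :
    (1 - 2 * lam ^ 2 * s ^ 2 - 4 * lam * (1 - lam) * s ^ 4) ^ 2
        + (lam * (2 * s * c) * (1 + 2 * (1 - lam) * s ^ 2)) ^ 2
      = 1 - 4 * lam * (1 - lam) ^ 2 * (2 - lam) * s ^ 4 := by
  linear_combination (4 * lam ^ 2 * s ^ 2 * (1 + 2 * (1 - lam) * s ^ 2) ^ 2) * hsc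

lemma Real.sin_eq_two_mul_sin_half_mul_cos_half (θ : ℝ) :
    Real.sin θ = 2 * Real.sin (θ / 2) * Real.cos (θ / 2) := by
  rw [← Real.sin_two_mul, mul_div_cancel₀ θ two_ne_zero]

/-- The Beam-Warming amplification factor satisfies
`|F(θ)|² = 1 − 4λ(1−λ)²(2−λ) sin⁴(θ/2)`. -/
theorem beam_warming_amplification_modulus (lam θ : ℝ) :
    (norm (1 - 2 * (lam : ℂ) ^ 2 * (Real.sin (θ / 2) : ℂ) ^ 2
        - 4 * (lam : ℂ) * (1 - (lam : ℂ)) * (Real.sin (θ / 2) : ℂ) ^ 4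
        + Complex.I * (lam : ℂ) * (Real.sin θ : ℂ)
            * (1 + 2 * (1 - (lam : ℂ)) * (Real.sin (θ / 2) : ℂ) ^ 2))) ^ 2
      = 1 - 4 * lam * (1 - lam) ^ 2 * (2 - lam) * (Real.sin (θ / 2)) ^ 4 := by
  set s := Real.sin (θ / 2)
  set c := Real.cos (θ / 2)
  have hsin : Real.sin θ = 2 * s * c := Real.sin_eq_two_mul_sin_half_mul_cos_half θ
  have hF : 1 - 2 * (lam : ℂ) ^ 2 * (s : ℂ) ^ 2 - 4 * (lam : ℂ) * (1 - (lam : ℂ)) * (s : ℂ) ^ 4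
        + Complex.I * (lam : ℂ) * (Real.sin θ : ℂ) * (1 + 2 * (1 - (lam : ℂ)) * (s : ℂ) ^ 2)
      = ((1 - 2 * lam ^ 2 * s ^ 2 - 4 * lam * (1 - lam) * s ^ 4 : ℝ) : ℂ)
        + ((lam * (2 * s * c) * (1 + 2 * (1 - lam) * s ^ 2) : ℝ) : ℂ) * Complex.I := by
    rw [hsin]; push_cast; ring
  rw [hF, Complex.sq_norm, Complex.normSq_add_mul_I]
  exact beamWarming_re_sq_add_im_sq (Real.sin_sq_add_cos_sq _)
end

section
/- If λ ∈ (0,1) ∪ (1,2), then for every θ ∈ [−π, π] with θ ≠ 0, the Beam-Warming amplification factor F(θ) = 1 − 2λ² sin²(θ/2) − 4λ(1−λ) sin⁴(θ/2) + i λ sin θ (1 + 2(1−λ) sin²(θ/2)) satisfies |F(θ)| < 1, and F(0) = 1. -/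
/-!
Writing `s = sin (θ / 2)` and `sin θ = 2 s cos (θ / 2)`, the squared modulus of the amplification
factor collapses to `1 - 4λ(1-λ)²(2-λ)s⁴`. The coefficient `λ(1-λ)²(2-λ)` is positive exactly for
`λ ∈ (0,1) ∪ (1,2)`, and `s ≠ 0` for `0 < |θ| ≤ π`.
-/

open Real

noncomputable def beamWarmingFactor (lam θ : ℝ) : ℂ :=
  1 - 2 * (lam : ℂ) ^ 2 * (sin (θ / 2) : ℂ) ^ 2
    - 4 * (lam : ℂ) * (1 - (lam : ℂ)) * (sin (θ / 2) : ℂ) ^ 4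
    + Complex.I * (lam : ℂ) * (sin θ : ℂ) * (1 + 2 * (1 - (lam : ℂ)) * (sin (θ / 2) : ℂ) ^ 2)

theorem beamWarmingFactor_zero (lam : ℝ) : beamWarmingFactor lam 0 = 1 := by
  simp [beamWarmingFactor]

theorem beamWarmingFactor_eq_re_add_im_mul_I (lam θ : ℝ) :
    beamWarmingFactor lam θ =
      ((1 - 2 * lam ^ 2 * sin (θ / 2) ^ 2 - 4 * lam * (1 - lam) * sin (θ / 2) ^ 4 : ℝ) : ℂ)
        + ((lam * sin θ * (1 + 2 * (1 - lam) * sin (θ / 2) ^ 2) : ℝ) : ℂ) * Complex.I := by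
  rw [beamWarmingFactor]
  push_cast
  ring

theorem normSq_beamWarmingFactor (lam θ : ℝ) :
    Complex.normSq (beamWarmingFactor lam θ) =
      1 - 4 * (lam * (1 - lam) ^ 2 * (2 - lam)) * sin (θ / 2) ^ 4 := by
  have hsin : sin θ = 2 * sin (θ / 2) * cos (θ / 2) := by
    rw [← sin_two_mul]
    ring_nf
  rw [beamWarmingFactor_eq_re_add_im_mul_I, Complex.normSq_add_mul_I, hsin]
  linear_combination (4 * lam ^ 2 * sin (θ / 2) ^ 2 * (1 + 2 * (1 - lam) * sin (θ / 2) ^ 2) ^ 2)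
    * cos_sq_add_sin_sq (θ / 2)

theorem sin_half_ne_zero_of_mem_Icc {θ : ℝ} (hθ : θ ∈ Set.Icc (-π) π) (hθ0 : θ ≠ 0) :
    sin (θ / 2) ≠ 0 := by
  intro h
  have hlo : -π < θ / 2 := by linarith [hθ.1, pi_pos]
  have hhi : θ / 2 < π := by linarith [hθ.2, pi_pos]
  exact hθ0 (by linarith [(sin_eq_zero_iff_of_lt_of_lt hlo hhi).mp h])

theorem mul_one_sub_sq_mul_two_sub_pos {lam : ℝ} (hlam : lam ∈ Set.Ioo (0 : ℝ) 1 ∪ Set.Ioo (1 : ℝ) 2) :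
    0 < lam * (1 - lam) ^ 2 * (2 - lam) := by
  rcases hlam with ⟨h0, h1⟩ | ⟨h1, h2⟩
  · have : 0 < (1 - lam) ^ 2 := by nlinarith
    have : 0 < 2 - lam := by linarith
    positivity
  · have : 0 < (1 - lam) ^ 2 := by nlinarith
    have : 0 < lam := by linarith
    have : 0 < 2 - lam := by linarith
    positivity

theorem norm_beamWarmingFactor_lt_one {lam θ : ℝ}
    (hlam : lam ∈ Set.Ioo (0 : ℝ) 1 ∪ Set.Ioo (1 : ℝ) 2) (hs : sin (θ / 2) ≠ 0) :
    ‖beamWarmingFactor lam θ‖ < 1 := by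
  have hdecay : 0 < 4 * (lam * (1 - lam) ^ 2 * (2 - lam)) * sin (θ / 2) ^ 4 := by
    have := mul_one_sub_sq_mul_two_sub_pos hlam
    positivity
  have hsq : ‖beamWarmingFactor lam θ‖ ^ 2 < 1 := by
    rw [Complex.sq_norm, normSq_beamWarmingFactor]
    linarith
  nlinarith [norm_nonneg (beamWarmingFactor lam θ)]

/-- For `λ ∈ (0,1) ∪ (1,2)`, the Beam-Warming amplification factor satisfies
`|F(θ)| < 1` for every `θ ∈ [−π, π]` with `θ ≠ 0`, and `F(0) = 1`. -/
theorem beam_warming_dissipation (lam : ℝ)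
    (hlam : lam ∈ Set.Ioo (0 : ℝ) 1 ∪ Set.Ioo (1 : ℝ) 2)
    (F : ℝ → ℂ)
    (hF : ∀ θ : ℝ, F θ = 1 - 2 * (lam : ℂ) ^ 2 * (Real.sin (θ / 2) : ℂ) ^ 2
        - 4 * (lam : ℂ) * (1 - (lam : ℂ)) * (Real.sin (θ / 2) : ℂ) ^ 4
        + Complex.I * (lam : ℂ) * (Real.sin θ : ℂ)
            * (1 + 2 * (1 - (lam : ℂ)) * (Real.sin (θ / 2) : ℂ) ^ 2)) :
    (∀ θ ∈ Set.Icc (-Real.pi) Real.pi, θ ≠ 0 → ‖F θ‖ < 1) ∧ F 0 = 1 := by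
  obtain rfl : F = beamWarmingFactor lam := funext hF
  exact ⟨fun θ hθ hθ0 => norm_beamWarmingFactor_lt_one hlam (sin_half_ne_zero_of_mem_Icc hθ hθ0),
    beamWarmingFactor_zero lam⟩
end

section
/- Let F ∈ L¹(ℝ;ℂ). Then lim_{n→∞} ∫_ℝ F(x) |cos(n^{1/4} x − π/4)| dx = (2/π) ∫_ℝ F(x) dx. -/
/-!
On continuous `T`-periodic functions, the functionals `g ↦ ∫ g(t x + c) F(x) dx` have norm at
most `‖F‖₁` uniformly in `t`, so the set of `g` for which the limit as `t → ±∞` is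
`(mean g) • ∫ F` is closed, and it suffices to check it on the dense span of the characters
`e_k`. For `e_0 = 1` there is nothing to prove, and for `k ≠ 0` the integral is, up to a
unimodular phase, the Fourier transform of `F` at `-k t / T`, which tends to `0` by the
Riemann–Lebesgue lemma. It remains to take `g = |cos|`, whose mean over a period is `2 / π`.
-/

open MeasureTheory Filter Topology Real AddCircle

section Equicontinuous

variable {ι 𝕜 X Y : Type*} [NontriviallyNormedField 𝕜] [NormedAddCommGroup X]
  [NormedSpace 𝕜 X] [NormedAddCommGroup Y] [NormedSpace 𝕜 Y]

theorem ContinuousLinearMap.tendsto_of_tendsto_of_topologicalClosure_span_eq_top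
    {L : ι → X →L[𝕜] Y} {Λ : X →L[𝕜] Y} {l : Filter ι} {C : ℝ} (hL : ∀ i, ‖L i‖ ≤ C)
    {s : Set X} (hs : (Submodule.span 𝕜 s).topologicalClosure = ⊤)
    (h : ∀ x ∈ s, Tendsto (L · x) l (𝓝 (Λ x))) (x : X) :
    Tendsto (L · x) l (𝓝 (Λ x)) := by
  have hequi : Equicontinuous ((↑) ∘ L) :=
    ((NormedSpace.equicontinuous_TFAE L).out 1 5).2 (⟨C, hL⟩ : ∃ C, ∀ i, ‖L i‖ ≤ C)
  have hclosed : IsClosed {x | Tendsto (L · x) l (𝓝 (Λ x))} :=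
    hequi.isClosed_setOfPred_tendsto Λ.continuous
  have hspan : (Submodule.span 𝕜 s : Set X) ⊆ {x | Tendsto (L · x) l (𝓝 (Λ x))} := by
    intro x hx
    induction hx using Submodule.span_induction with
    | mem x hx => exact h x hx
    | zero => simpa using tendsto_const_nhds
    | add x y _ _ hx hy => simpa using hx.add hy
    | smul a x _ hx => simpa using hx.const_smul a
  have hall := hclosed.closure_subset_iff.mpr hspan
  rw [← Submodule.topologicalClosure_coe, hs] at hall
  exact hall trivial

end Equicontinuous

section IntegralComp

variable {α K E : Type*} [MeasurableSpace α] {μ : Measure α} [TopologicalSpace K]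
  [CompactSpace K] [MeasurableSpace K] [OpensMeasurableSpace K] [NormedAddCommGroup E]
  [NormedSpace ℂ E]

theorem MeasureTheory.Integrable.continuousMap_comp_smul {F : α → E} (hF : Integrable F μ)
    {θ : α → K} (hθ : Measurable θ) (g : C(K, ℂ)) : Integrable (fun x => g (θ x) • F x) μ :=
  hF.bdd_smul ‖g‖ (g.continuous.measurable.comp hθ).aestronglyMeasurable
    (.of_forall fun x => g.norm_coe_le_norm (θ x))

noncomputable def integralCompSMulCLM (F : α → E) (hF : Integrable F μ) (θ : α → K)
    (hθ : Measurable θ) : C(K, ℂ) →L[ℂ] E :=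
  LinearMap.mkContinuous
    { toFun := fun g => ∫ x, g (θ x) • F x ∂μ
      map_add' := fun g h => by
        simp only [ContinuousMap.add_apply, add_smul]
        exact integral_add (hF.continuousMap_comp_smul hθ g)
          (hF.continuousMap_comp_smul hθ h)
      map_smul' := fun a g => by
        simp only [ContinuousMap.smul_apply, smul_eq_mul, mul_smul, RingHom.id_apply]
        exact integral_smul a _ }
    (∫ x, ‖F x‖ ∂μ) fun g => by
      rw [LinearMap.coe_mk, AddHom.coe_mk, ← integral_mul_const]
      refine norm_integral_le_of_norm_le (hF.norm.mul_const _) (.of_forall fun x => ?_)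
      rw [norm_smul, mul_comm]
      exact mul_le_mul_of_nonneg_left (g.norm_coe_le_norm _) (norm_nonneg _)

@[simp]
theorem integralCompSMulCLM_apply (F : α → E) (hF : Integrable F μ) (θ : α → K)
    (hθ : Measurable θ) (g : C(K, ℂ)) :
    integralCompSMulCLM F hF θ hθ g = ∫ x, g (θ x) • F x ∂μ :=
  rfl

theorem norm_integralCompSMulCLM_le (F : α → E) (hF : Integrable F μ) (θ : α → K)
    (hθ : Measurable θ) : ‖integralCompSMulCLM F hF θ hθ‖ ≤ ∫ x, ‖F x‖ ∂μ :=
  LinearMap.mkContinuous_norm_le _ (integral_nonneg fun _ => norm_nonneg _) _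

end IntegralComp

section Fourier

open scoped FourierTransform

variable {ι E : Type*} [NormedAddCommGroup E] [NormedSpace ℂ E] {T : ℝ} [hT : Fact (0 < T)]

theorem fourier_coe_mul_add (k : ℤ) (t x c : ℝ) :
    fourier k ((t * x + c : ℝ) : AddCircle T) =
      fourier k (c : AddCircle T) * 𝐞 (-(x * (-(k / T) * t))) := by
  rw [fourier_coe_apply, fourier_coe_apply, Real.fourierChar_apply, ← Complex.exp_add]
  congr 1
  have : (T : ℂ) ≠ 0 := by exact_mod_cast hT.out.ne'
  push_cast
  field_simp
  ring

theorem tendsto_integral_fourier_comp_smul {k : ℤ} (hk : k ≠ 0) (F : ℝ → E) {l : Filter ι}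
    {t : ι → ℝ} (ht : Tendsto t l (cocompact ℝ)) (c : ℝ) :
    Tendsto (fun i => ∫ x, fourier k ((t i * x + c : ℝ) : AddCircle T) • F x) l (𝓝 0) := by
  have hkT : -(k / T) ≠ 0 := neg_ne_zero.mpr (div_ne_zero (by exact_mod_cast hk) hT.out.ne')
  have hRL := (Real.tendsto_integral_exp_smul_cocompact F).comp
    ((tendsto_cocompact_mul_left₀ hkT).comp ht)
  have hfactor : ∀ i, ∫ x, fourier k ((t i * x + c : ℝ) : AddCircle T) • F x =
      fourier k (c : AddCircle T) • ∫ x, 𝐞 (-(x * (-(k / T) * t i))) • F x := by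
    intro i
    simp_rw [← integral_smul, fourier_coe_mul_add, mul_smul, Circle.smul_def]
  simpa only [hfactor, smul_zero, Function.comp_def] using
    hRL.const_smul (fourier k (c : AddCircle T))

theorem integral_fourier_haarAddCircle (k : ℤ) :
    ∫ z, fourier k z ∂haarAddCircle (T := T) = if k = 0 then 1 else 0 := by
  split_ifs with hk
  · simp [hk]
  · exact integral_eq_zero_of_add_right_eq_neg (fourier_add_half_inv_index hk hT.out)

theorem tendsto_integral_comp_smul_of_tendsto_cocompact {F : ℝ → E} (hF : Integrable F)
    (g : C(AddCircle T, ℂ)) {l : Filter ι} {t : ι → ℝ} (ht : Tendsto t l (cocompact ℝ))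
    (c : ℝ) :
    Tendsto (fun i => ∫ x, g ((t i * x + c : ℝ) : AddCircle T) • F x) l
      (𝓝 ((∫ z, g z ∂haarAddCircle) • ∫ x, F x)) := by
  have hθ (i : ι) : Measurable fun x : ℝ => ((t i * x + c : ℝ) : AddCircle T) :=
    AddCircle.measurable_mk'.comp (by fun_prop)
  let mean : C(AddCircle T, ℂ) →L[ℂ] ℂ :=
    integralCompSMulCLM (μ := haarAddCircle) 1 (integrable_const 1) id measurable_id
  have hmean (g : C(AddCircle T, ℂ)) : mean g = ∫ z, g z ∂haarAddCircle := by
    simp [mean]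
  have hfourier : ∀ f ∈ Set.range (@fourier T), Tendsto
      (fun i => integralCompSMulCLM F hF _ (hθ i) f) l (𝓝 (mean.smulRight (∫ x, F x) f)) := by
    rintro _ ⟨k, rfl⟩
    simp only [integralCompSMulCLM_apply, ContinuousLinearMap.smulRight_apply, hmean,
      integral_fourier_haarAddCircle]
    split_ifs with hk
    · simpa [hk] using tendsto_const_nhds
    · simpa using tendsto_integral_fourier_comp_smul hk F ht c
  simpa [hmean] using ContinuousLinearMap.tendsto_of_tendsto_of_topologicalClosure_span_eq_top
    (fun i => norm_integralCompSMulCLM_le F hF _ (hθ i)) span_fourier_closure_eq_top hfourier g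

end Fourier

instance : Fact (0 < π) := ⟨pi_pos⟩

noncomputable def absCos : C(AddCircle π, ℂ) where
  toFun := Function.Periodic.lift (f := fun x : ℝ => ((|cos x| : ℝ) : ℂ)) fun x => by
    simp [cos_add_pi]
  continuous_toFun := continuous_coinduced_dom.mpr
    (show Continuous fun x : ℝ => ((|cos x| : ℝ) : ℂ) by fun_prop)

@[simp]
theorem absCos_coe (x : ℝ) : absCos (x : AddCircle π) = ((|cos x| : ℝ) : ℂ) :=
  rfl

theorem integral_absCos_haarAddCircle : ∫ z, absCos z ∂haarAddCircle = ((2 / π : ℝ) : ℂ) := by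
  have hcos : ∫ x in -(π / 2)..-(π / 2) + π, |cos x| = 2 := by
    rw [show -(π / 2) + π = π / 2 by ring,
      intervalIntegral.integral_congr fun x hx => abs_of_nonneg (cos_nonneg_of_mem_Icc ?_)]
    · norm_num
    · rwa [Set.uIcc_of_le (by linarith [pi_pos])] at hx
  rw [AddCircle.integral_haarAddCircle, ← AddCircle.intervalIntegral_preimage π (-(π / 2))]
  simp_rw [absCos_coe]
  rw [intervalIntegral.integral_ofReal, hcos]
  push_cast
  simp [div_eq_inv_mul]

/-- For `F ∈ L¹(ℝ;ℂ)`,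
`lim_{n→∞} ∫ F(x) |cos(n^{1/4} x − π/4)| dx = (2/π) ∫ F(x) dx`. -/
theorem tendsto_integral_abs_cos (F : ℝ → ℂ) (hF : Integrable F) :
    Filter.Tendsto
      (fun n : ℕ => ∫ x : ℝ,
        F x * (|Real.cos ((n : ℝ) ^ ((1 : ℝ) / 4) * x - Real.pi / 4)| : ℝ))
      Filter.atTop (nhds ((2 / Real.pi : ℝ) * ∫ x : ℝ, F x)) := by
  have ht : Tendsto (fun n : ℕ => (n : ℝ) ^ ((1 : ℝ) / 4)) atTop (cocompact ℝ) :=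
    ((tendsto_rpow_atTop (by norm_num)).comp tendsto_natCast_atTop_atTop).mono_right
      atTop_le_cocompact
  have hlim := tendsto_integral_comp_smul_of_tendsto_cocompact hF absCos ht (-(π / 4))
  simp only [absCos_coe, integral_absCos_haarAddCircle, ← sub_eq_add_neg, smul_eq_mul] at hlim
  simpa only [mul_comm] using hlim
end
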